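/- Deletion commutes with collapse: for a bijection w : X → Y, an element a ∈ Y, and distinct b, c ∈ Y ∖ {a}, one has c_{b,c}^f(c_{∅,a}(w)) = c_{∅,a}(c_{b,c}^f(w)). -/
import Mathlib


open Function

/-- The (unique) preimage of `z` under a partially defined injection `v : X → Option Z`. -/
noncomputable def preim {X Z : Type} [Nonempty X] (v : X → Option Z) (z : Z) : X :=
  Function.invFun v (some z)

/-- The collapse operation `c_{i,j}^f` on a partially defined injection
`v : X → Option Z`: the column whose image is the later of `i, j` (comparing the
positions of the preimages) is deleted (value `none`), the earlier of the two preimages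
is sent to the new symbol `f` (encoded `Sum.inr ()`), and every other value is kept. -/
noncomputable def collapseP {X Z : Type} [LinearOrder X] [Nonempty X] [DecidableEq Z]
    (v : X → Option Z) (i j : Z) : X → Option (Z ⊕ Unit) :=
  fun x =>
    if v x = some i ∨ v x = some j then
      (if x = min (preim v i) (preim v j) then some (Sum.inr ()) else none)
    else Option.map Sum.inl (v x)

/-- The deletion operation `c_{∅,a}` on a partially defined injection: the column with
image `a` is deleted, all other values are kept. -/
def deleteP {X Z : Type} [DecidableEq Z] (v : X → Option Z) (a : Z) : X → Option Z :=
  fun x => if v x = some a then none else v x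

lemma preim_eq_of {X Z : Type} [Nonempty X] (v : X → Option Z) (z : Z) (x0 : X)
    (h0 : v x0 = some z) (huniq : ∀ x, v x = some z → x = x0) : preim v z = x0 := by
  exact huniq _ (Function.invFun_eq ⟨x0, h0⟩)

/-- Deletion commutes with collapse: `c_{b,c}^f(c_{∅,a}(w)) = c_{∅,a}(c_{b,c}^f(w))`
for a bijection `w : X → Y`, `a ∈ Y` and distinct `b, c ∈ Y ∖ {a}`. -/
theorem delete_collapse_comm {X Y : Type} [LinearOrder X] [Nonempty X] [DecidableEq Y]
    (w : X ≃ Y) (a b c : Y) (hab : a ≠ b) (hac : a ≠ c) (hbc : b ≠ c) :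
    collapseP (deleteP (fun x => some (w x)) a) b c
      = deleteP (collapseP (fun x => some (w x)) b c) (Sum.inl a) := by
  have hp2 : ∀ z : Y, preim (fun x => some (w x)) z = w.symm z := by
    intro z
    refine preim_eq_of _ _ _ (by simp) ?_
    intro x hx
    simp only [Option.some.injEq] at hx
    exact w.injective (by simp [hx])
  have hp1 : ∀ z : Y, z ≠ a → preim (deleteP (fun x => some (w x)) a) z = w.symm z := by
    intro z hz
    refine preim_eq_of _ _ _ ?_ ?_
    · simp [deleteP, hz, (Ne.symm hz)]
    · intro x hx
      simp only [deleteP] at hx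
      by_cases hxa : w x = a
      · simp [hxa] at hx
      · rw [if_neg (by simpa using hxa)] at hx
        simp only [Option.some.injEq] at hx
        exact w.injective (by simp [hx])
  funext x
  simp only [collapseP, deleteP, hp1 b (Ne.symm hab), hp1 c (Ne.symm hac), hp2]
  by_cases hxa : w x = a
  · have hb : ¬ (w x = b) := fun h => hab (hxa ▸ h.symm ▸ rfl)
    have hc : ¬ (w x = c) := fun h => hac (hxa ▸ h.symm ▸ rfl)
    simp [hxa, hb, hc, hab, hac]
  · by_cases hbc' : w x = b ∨ w x = c
    · have hcond : (some (w x) = some b ∨ some (w x) = some c) := by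
        rcases hbc' with h | h <;> simp [h]
      simp only [if_neg (by simpa using hxa), hcond, if_pos, Option.some.injEq]
      by_cases hm : x = min (w.symm b) (w.symm c)
      · subst hm
        have hw : w (min (w.symm b) (w.symm c)) = b ∨ w (min (w.symm b) (w.symm c)) = c := by
          rcases min_cases (w.symm b) (w.symm c) with ⟨h, _⟩ | ⟨h, _⟩ <;> rw [h] <;> simp
        simp [hw]
      · simp [hm, hbc']
    · push_neg at hbc'
      simp [hxa, hbc'.1, hbc'.2]
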